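/- arXiv:2412.10926 — 3 statements merged into one kernel-verified Lean document; each statement's English description precedes it below -/
import Mathlib

section
/- Let G be a connected bipartite graph with bipartition U ∪ V, |U| ≤ |V|. Then G is equimatchable if and only if every maximal matching of G saturates all vertices of U. -/
/-!
Every edge has exactly one end in `U`, so a matching saturating `U` has exactly `|U|` edges.
Conversely, König's theorem gives a matching `M₀` and a vertex cover `C` with `|C| ≤ |M₀|`.
Then `M₀` is maximum, each vertex of `C` is matched to a vertex outside `C`, and an edge
`ab` inside `C` could replace the two matching edges at `a` and `b`, leaving a maximal matching
with one edge fewer. Hence in an equimatchable graph `C` is independent, and in a connected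
bipartite graph an independent vertex cover is one of the two sides. Both sides are larger than
a maximal matching that misses a vertex of `U`, a contradiction.
-/

/-- `F` is an edge dominating set of `G`: every edge of `G` is in `F` or shares a
vertex with an edge of `F` (edges of `F` themselves share a vertex with themselves). -/
def IsEDS {V : Type*} (G : SimpleGraph V) (F : Finset (Sym2 V)) : Prop :=
  ↑F ⊆ G.edgeSet ∧ ∀ e ∈ G.edgeSet, ∃ f ∈ F, ∃ v : V, v ∈ e ∧ v ∈ f

/-- `F` is a minimal edge dominating set of `G`. -/
def IsMinEDS {V : Type*} (G : SimpleGraph V) (F : Finset (Sym2 V)) : Prop :=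
  IsEDS G F ∧ ∀ F' ⊂ F, ¬ IsEDS G F'

/-- `G` is well-edge-dominated: all minimal edge dominating sets have the same size. -/
def WellEdgeDominated {V : Type*} (G : SimpleGraph V) : Prop :=
  ∀ F₁ F₂ : Finset (Sym2 V), IsMinEDS G F₁ → IsMinEDS G F₂ → F₁.card = F₂.card

/-- `M` is a matching of `G`: a set of pairwise vertex-disjoint edges. -/
def IsMatchingSet {V : Type*} (G : SimpleGraph V) (M : Finset (Sym2 V)) : Prop :=
  ↑M ⊆ G.edgeSet ∧ ∀ e ∈ M, ∀ f ∈ M, e ≠ f → ∀ v : V, ¬ (v ∈ e ∧ v ∈ f)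

/-- `M` is a maximal matching of `G`: a matching such that every edge of `G`
shares a vertex with an edge of `M` (so no edge can be added). -/
def IsMaximalMatching {V : Type*} (G : SimpleGraph V) (M : Finset (Sym2 V)) : Prop :=
  IsMatchingSet G M ∧ ∀ e ∈ G.edgeSet, ∃ f ∈ M, ∃ v : V, v ∈ e ∧ v ∈ f

/-- `G` is equimatchable: all maximal matchings have the same size. -/
def Equimatchable {V : Type*} (G : SimpleGraph V) : Prop :=
  ∀ M₁ M₂ : Finset (Sym2 V), IsMaximalMatching G M₁ → IsMaximalMatching G M₂ →
    M₁.card = M₂.card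

section

variable {W : Type*} {G : SimpleGraph W}

namespace SimpleGraph

theorem IsVertexCover.exists_mem_of_mem_edgeSet {C : Set W} (hC : G.IsVertexCover C)
    {e : Sym2 W} (he : e ∈ G.edgeSet) : ∃ v ∈ C, v ∈ e := by
  induction e with
  | h a b =>
    rcases hC he with ha | hb
    · exact ⟨a, ha, Sym2.mem_mk_left a b⟩
    · exact ⟨b, hb, Sym2.mem_mk_right a b⟩

theorem IsIndepSet.mem_iff_notMem_of_adj {C : Set W} (hCi : G.IsIndepSet C)
    (hCc : G.IsVertexCover C) {x y : W} (hxy : G.Adj x y) : x ∈ C ↔ y ∉ C :=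
  ⟨fun hx hy => hCi hx hy hxy.ne hxy, fun hy => (hCc hxy).resolve_right hy⟩

theorem Preconnected.eq_or_eq_compl_of_isIndepSet_of_isVertexCover (hG : G.Preconnected)
    {C D : Set W} (hCi : G.IsIndepSet C) (hCc : G.IsVertexCover C)
    (hDi : G.IsIndepSet D) (hDc : G.IsVertexCover D) : C = D ∨ C = Dᶜ := by
  have hadj : ∀ x y, G.Adj x y → ((x ∈ C ↔ x ∈ D) ↔ (y ∈ C ↔ y ∈ D)) := by
    intro x y hxy
    rw [hCi.mem_iff_notMem_of_adj hCc hxy, hDi.mem_iff_notMem_of_adj hDc hxy]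
    tauto
  have hconst : ∀ x y, (x ∈ C ↔ x ∈ D) ↔ (y ∈ C ↔ y ∈ D) := by
    intro x y
    obtain ⟨p⟩ := hG x y
    induction p with
    | nil => rfl
    | cons hxy _ ih => exact (hadj _ _ hxy).trans ih
  by_cases h : ∃ x, (x ∈ C ↔ x ∈ D)
  · obtain ⟨x, hx⟩ := h
    exact Or.inl (Set.ext fun y => (hconst x y).1 hx)
  · exact Or.inr (Set.ext fun y => by
      rw [Set.mem_compl_iff]
      exact by_contra fun hy => h ⟨y, by tauto⟩)

theorem IsBipartiteWith.isVertexCover_left {s t : Set W} (h : G.IsBipartiteWith s t) :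
    G.IsVertexCover s :=
  fun _ _ hvw => (h.mem_of_adj hvw).imp And.left And.right

theorem IsBipartiteWith.isIndepSet_left {s t : Set W} (h : G.IsBipartiteWith s t) :
    G.IsIndepSet s :=
  fun _ hv _ hw _ hvw => Set.disjoint_left.1 h.disjoint hw (h.mem_of_mem_adj hv hvw)

end SimpleGraph

namespace IsMatchingSet

variable {M : Finset (Sym2 W)} {C : Finset W}

theorem adj (hM : IsMatchingSet G M) {a b : W} (h : s(a, b) ∈ M) : G.Adj a b := hM.1 h

theorem eq_of_mem_of_mem (hM : IsMatchingSet G M) {e f : Sym2 W} (he : e ∈ M) (hf : f ∈ M)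
    {v : W} (hve : v ∈ e) (hvf : v ∈ f) : e = f :=
  by_contra fun hne => hM.2 e he f hf hne v ⟨hve, hvf⟩

theorem subset (hM : IsMatchingSet G M) {M' : Finset (Sym2 W)} (h : M' ⊆ M) :
    IsMatchingSet G M' :=
  ⟨(Finset.coe_subset.2 h).trans hM.1, fun e he f hf => hM.2 e (h he) f (h hf)⟩

theorem insert_of_forall_notMem [DecidableEq W] (hM : IsMatchingSet G M) {a b : W}
    (hab : G.Adj a b) (ha : ∀ e ∈ M, a ∉ e) (hb : ∀ e ∈ M, b ∉ e) :
    IsMatchingSet G (insert s(a, b) M) := by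
  have hfree : ∀ f ∈ M, ∀ v ∈ s(a, b), v ∉ f := by
    intro f hf v hv
    rcases Sym2.mem_iff.1 hv with rfl | rfl
    exacts [ha f hf, hb f hf]
  refine ⟨?_, fun e he f hf hne v hv => ?_⟩
  · rw [Finset.coe_insert]
    exact Set.insert_subset hab hM.1
  rcases Finset.mem_insert.1 he with rfl | he <;> rcases Finset.mem_insert.1 hf with rfl | hf
  · exact hne rfl
  · exact hfree f hf v hv.1 hv.2
  · exact hfree e he v hv.2 hv.1
  · exact hM.2 e he f hf hne v hv

theorem card_le_of_forall_exists_mem (hM : IsMatchingSet G M) {T : Finset W}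
    (h : ∀ e ∈ M, ∃ t ∈ T, t ∈ e) : M.card ≤ T.card :=
  Finset.card_le_card_of_forall_subsingleton (fun e t => t ∈ e) h
    fun _ _ _ he₁ _ he₂ => hM.eq_of_mem_of_mem he₁.1 he₂.1 he₁.2 he₂.2

theorem card_le_card_of_isVertexCover (hM : IsMatchingSet G M) (hC : G.IsVertexCover C) :
    M.card ≤ C.card :=
  hM.card_le_of_forall_exists_mem fun _ he => hC.exists_mem_of_mem_edgeSet (hM.1 he)

theorem exists_mem_of_card_le (hM : IsMatchingSet G M) (hC : G.IsVertexCover C)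
    (hcard : C.card ≤ M.card) {c : W} (hc : c ∈ C) : ∃ e ∈ M, c ∈ e := by
  classical
  by_contra! hmiss
  have hle : M.card ≤ (C.erase c).card := hM.card_le_of_forall_exists_mem fun e he => by
    obtain ⟨v, hv, hve⟩ := hC.exists_mem_of_mem_edgeSet (hM.1 he)
    exact ⟨v, Finset.mem_erase.2 ⟨fun h => hmiss e he (h ▸ hve), hv⟩, hve⟩
  have := Finset.card_erase_add_one hc
  omega

theorem notMem_of_card_le (hM : IsMatchingSet G M) (hC : G.IsVertexCover C)
    (hcard : C.card ≤ M.card) {a b : W} (hab : s(a, b) ∈ M) (ha : a ∈ C) : b ∉ C := by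
  classical
  intro hb
  have hle : M.card ≤ (C.erase b).card := hM.card_le_of_forall_exists_mem fun e he => by
    obtain ⟨v, hv, hve⟩ := hC.exists_mem_of_mem_edgeSet (hM.1 he)
    by_cases hvb : v = b
    · subst hvb
      obtain rfl := hM.eq_of_mem_of_mem he hab hve (Sym2.mem_mk_right a v)
      exact ⟨a, Finset.mem_erase.2 ⟨(hM.adj hab).ne, ha⟩, Sym2.mem_mk_left a v⟩
    · exact ⟨v, Finset.mem_erase.2 ⟨hvb, hv⟩, hve⟩
  have := Finset.card_erase_add_one hb
  omega

theorem exists_partner_notMem_of_card_le (hM : IsMatchingSet G M) (hC : G.IsVertexCover C)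
    (hcard : C.card ≤ M.card) {c : W} (hc : c ∈ C) : ∃ p ∉ C, s(c, p) ∈ M := by
  obtain ⟨e, he, hce⟩ := hM.exists_mem_of_card_le hC hcard hc
  obtain ⟨p, rfl⟩ := Sym2.mem_iff_exists.1 hce
  exact ⟨p, hM.notMem_of_card_le hC hcard he hc, he⟩

theorem isMaximalMatching_of_card_le (hM : IsMatchingSet G M) (hC : G.IsVertexCover C)
    (hcard : C.card ≤ M.card) : IsMaximalMatching G M := by
  classical
  refine ⟨hM, fun e he => ?_⟩
  by_contra! hfree
  induction e with
  | h a b =>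
    have hins := hM.insert_of_forall_notMem he (fun f hf => hfree f hf a (Sym2.mem_mk_left a b))
      (fun f hf => hfree f hf b (Sym2.mem_mk_right a b))
    have hle := hins.card_le_card_of_isVertexCover hC
    rw [Finset.card_insert_of_notMem fun h => hfree _ h a (Sym2.mem_mk_left a b)
      (Sym2.mem_mk_left a b)] at hle
    omega

/-- Trading the two matching edges at `a` and `b` for the edge `ab` leaves a maximal matching:
every edge still meets the cover `C`, and every vertex of `C` stays covered. -/
theorem exists_isMaximalMatching_card_add_one_eq (hM : IsMatchingSet G M)
    (hC : G.IsVertexCover C) (hcard : C.card ≤ M.card) {a b : W} (ha : a ∈ C) (hb : b ∈ C)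
    (hab : G.Adj a b) : ∃ M', IsMaximalMatching G M' ∧ M'.card + 1 = M.card := by
  classical
  obtain ⟨p, hp, hap⟩ := hM.exists_partner_notMem_of_card_le hC hcard ha
  obtain ⟨q, hq, hbq⟩ := hM.exists_partner_notMem_of_card_le hC hcard hb
  have hne : s(b, q) ≠ s(a, p) := by
    rintro h
    rcases Sym2.eq_iff.1 h with ⟨rfl, -⟩ | ⟨-, rfl⟩
    exacts [hab.ne rfl, hq ha]
  set M₀ := (M.erase s(a, p)).erase s(b, q)
  have hM₀ : M₀ ⊆ M := (Finset.erase_subset _ _).trans (Finset.erase_subset _ _)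
  have ha₀ : ∀ e ∈ M₀, a ∉ e := fun e he hae =>
    (Finset.mem_erase.1 (Finset.mem_of_mem_erase he)).1
      (hM.eq_of_mem_of_mem (hM₀ he) hap hae (Sym2.mem_mk_left a p))
  have hb₀ : ∀ e ∈ M₀, b ∉ e := fun e he hbe =>
    (Finset.mem_erase.1 he).1 (hM.eq_of_mem_of_mem (hM₀ he) hbq hbe (Sym2.mem_mk_left b q))
  refine ⟨insert s(a, b) M₀,
    ⟨(hM.subset hM₀).insert_of_forall_notMem hab ha₀ hb₀, fun e he => ?_⟩, ?_⟩
  · obtain ⟨c, hc, hce⟩ := hC.exists_mem_of_mem_edgeSet he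
    obtain ⟨r, -, hcr⟩ := hM.exists_partner_notMem_of_card_le hC hcard hc
    by_cases h : s(c, r) ∈ M₀
    · exact ⟨s(c, r), Finset.mem_insert_of_mem h, c, hce, Sym2.mem_mk_left c r⟩
    have hcab : c = a ∨ c = b := by
      simp only [M₀, Finset.mem_erase, not_and_or, not_not] at h
      rcases h with h | h | h
      · rcases Sym2.eq_iff.1 h with ⟨rfl, -⟩ | ⟨rfl, -⟩
        exacts [Or.inr rfl, (hq hc).elim]
      · rcases Sym2.eq_iff.1 h with ⟨rfl, -⟩ | ⟨rfl, -⟩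
        exacts [Or.inl rfl, (hp hc).elim]
      · exact absurd hcr h
    refine ⟨s(a, b), Finset.mem_insert_self _ _, c, hce, ?_⟩
    rcases hcab with rfl | rfl
    exacts [Sym2.mem_mk_left c b, Sym2.mem_mk_right a c]
  · rw [Finset.card_insert_of_notMem fun h => ha₀ _ h (Sym2.mem_mk_left a b),
      Finset.card_erase_add_one (Finset.mem_erase.2 ⟨hne, hbq⟩), Finset.card_erase_add_one hap]

theorem card_eq_of_forall_mem {U : Finset W} (hM : IsMatchingSet G M)
    (hUc : G.IsVertexCover U) (hUi : G.IsIndepSet U) (hsat : ∀ u ∈ U, ∃ e ∈ M, u ∈ e) :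
    M.card = U.card := by
  refine le_antisymm (hM.card_le_card_of_isVertexCover hUc)
    (Finset.card_le_card_of_forall_subsingleton (fun u e => u ∈ e) hsat ?_)
  intro e he u hu u' hu'
  by_contra hne
  have hadj : G.Adj u u' := hM.1 ((Sym2.mem_and_mem_iff hne).1 ⟨hu.2, hu'.2⟩ ▸ he)
  exact hUi hu.1 hu'.1 hne hadj

end IsMatchingSet

theorem Equimatchable.isIndepSet_of_card_le (hG : Equimatchable G) {M : Finset (Sym2 W)}
    {C : Finset W} (hM : IsMatchingSet G M) (hC : G.IsVertexCover C) (hcard : C.card ≤ M.card) :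
    G.IsIndepSet C := by
  intro a ha b hb _ hab
  obtain ⟨M', hM', hM'M⟩ := hM.exists_isMaximalMatching_card_add_one_eq hC hcard ha hb hab
  have := hG _ _ hM' (hM.isMaximalMatching_of_card_le hC hcard)
  omega

variable {U : Finset W}

theorem isMatchingSet_image_mk [DecidableEq W] (hU : G.IsIndepSet U) {P : Finset (W × W)}
    (hPU : ∀ p ∈ P, p.1 ∈ U) (hPadj : ∀ p ∈ P, G.Adj p.1 p.2)
    (hfst : Set.InjOn Prod.fst (P : Set (W × W))) (hsnd : Set.InjOn Prod.snd (P : Set (W × W))) :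
    IsMatchingSet G (P.image fun p => s(p.1, p.2)) ∧
      (P.image fun p => s(p.1, p.2)).card = P.card := by
  have hUU : ∀ q ∈ P, ∀ q' ∈ P, q.1 ≠ q'.2 := fun q hq q' hq' h =>
    hU (hPU q' hq') (h ▸ hPU q hq) (hPadj q' hq').ne (hPadj q' hq')
  have hshare :
      ∀ p ∈ P, ∀ p' ∈ P, ∀ v ∈ s(p.1, p.2), v ∈ s(p'.1, p'.2) → p = p' := by
    intro p hp p' hp' v hv hv'
    rcases Sym2.mem_iff.1 hv with rfl | rfl <;> rcases Sym2.mem_iff.1 hv' with h | h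
    · exact hfst hp hp' h
    · exact absurd h (hUU p hp p' hp')
    · exact absurd h.symm (hUU p' hp' p hp)
    · exact hsnd hp hp' h
  refine ⟨⟨?_, ?_⟩, Finset.card_image_of_injOn fun p hp p' hp' h =>
    hshare p hp p' hp' p.1 (Sym2.mem_mk_left p.1 p.2) (h ▸ Sym2.mem_mk_left p.1 p.2)⟩
  · rintro _ he
    obtain ⟨p, hp, rfl⟩ := Finset.mem_image.1 he
    exact hPadj p hp
  · rintro _ he _ hf hne v ⟨hve, hvf⟩
    obtain ⟨p, hp, rfl⟩ := Finset.mem_image.1 he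
    obtain ⟨p', hp', rfl⟩ := Finset.mem_image.1 hf
    rw [hshare p hp p' hp' v hve hvf] at hne
    exact hne rfl

variable [DecidableEq W] [Fintype W] [DecidableRel G.Adj]

namespace SimpleGraph

variable (G) in
def neighborhood (X : Finset W) : Finset W :=
  X.biUnion fun u => G.neighborFinset u

theorem mem_neighborhood {X : Finset W} {w : W} :
    w ∈ G.neighborhood X ↔ ∃ u ∈ X, G.Adj u w := by
  simp [neighborhood]

end SimpleGraph

/-- Hall's theorem applied after adding `d` extra vertices adjacent to all of `U`. -/
theorem exists_injective_adj_of_card_le_card_neighborhood_add (d : ℕ)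
    (hdef : ∀ X ⊆ U, X.card ≤ (G.neighborhood X).card + d) :
    ∃ f : U → W ⊕ Fin d, Function.Injective f ∧ ∀ u w, f u = .inl w → G.Adj u w := by
  obtain ⟨f, hf, hft⟩ := (Finset.all_card_le_biUnion_card_iff_exists_injective
    fun u : U => (G.neighborFinset u).disjSum (Finset.univ : Finset (Fin d))).1 fun A => by
      rcases A.eq_empty_or_nonempty with rfl | ⟨u₀, hu₀⟩
      · simp
      set X := A.map (Function.Embedding.subtype (· ∈ U))
      have hsub : (G.neighborhood X).disjSum (Finset.univ : Finset (Fin d)) ⊆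
          A.biUnion fun u : U => (G.neighborFinset u).disjSum (Finset.univ : Finset (Fin d)) := by
        rintro (w | i) h
        · simpa [X, SimpleGraph.mem_neighborhood] using h
        · exact Finset.mem_biUnion.2 ⟨u₀, hu₀, by simp⟩
      have hX := hdef X fun x hx => by
        obtain ⟨u, -, rfl⟩ := Finset.mem_map.1 hx
        exact u.2
      have := Finset.card_le_card hsub
      rw [Finset.card_map] at hX
      rw [Finset.card_disjSum, Finset.card_univ, Fintype.card_fin] at this
      omega
  exact ⟨f, hf, fun u w hw => by simpa [hw] using hft u⟩

/-- Hall's theorem with deficiency `d`: deleting the extra vertices from the system of distinct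
representatives loses at most `d` edges. -/
theorem exists_isMatchingSet_of_card_le_card_neighborhood_add (hU : G.IsIndepSet U) (d : ℕ)
    (hdef : ∀ X ⊆ U, X.card ≤ (G.neighborhood X).card + d) :
    ∃ M, IsMatchingSet G M ∧ U.card ≤ M.card + d := by
  obtain ⟨f, hf, hfadj⟩ := exists_injective_adj_of_card_le_card_neighborhood_add d hdef
  set P : Finset (W × W) :=
    Finset.univ.filter fun p => ∃ h : p.1 ∈ U, f ⟨p.1, h⟩ = .inl p.2
  have hmemP : ∀ {p : W × W}, p ∈ P ↔ ∃ h : p.1 ∈ U, f ⟨p.1, h⟩ = .inl p.2 := by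
    simp [P]
  have hPU : ∀ p ∈ P, p.1 ∈ U := fun p hp => (hmemP.1 hp).1
  have hPadj : ∀ p ∈ P, G.Adj p.1 p.2 := fun p hp => by
    obtain ⟨h, hp⟩ := hmemP.1 hp
    exact hfadj ⟨p.1, h⟩ p.2 hp
  have hfst : Set.InjOn Prod.fst (P : Set (W × W)) := fun p hp p' hp' h => by
    obtain ⟨_, hp⟩ := hmemP.1 hp
    obtain ⟨_, hp'⟩ := hmemP.1 hp'
    simp only [h] at hp
    exact Prod.ext h (Sum.inl_injective (hp.symm.trans hp'))
  have hsnd : Set.InjOn Prod.snd (P : Set (W × W)) := fun p hp p' hp' h => by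
    obtain ⟨_, hp⟩ := hmemP.1 hp
    obtain ⟨_, hp'⟩ := hmemP.1 hp'
    exact Prod.ext (congrArg Subtype.val (hf (hp.trans (h ▸ hp'.symm)))) h
  obtain ⟨hM, hMcard⟩ := isMatchingSet_image_mk hU hPU hPadj hfst hsnd
  refine ⟨_, hM, ?_⟩
  have hleft : (Finset.univ.image f).toLeft = P.image Prod.snd := by
    ext w
    simp [hmemP]
  have hcardf := Finset.card_toLeft_add_card_toRight (u := Finset.univ.image f)
  rw [Finset.card_image_of_injective _ hf, Finset.card_univ, Fintype.card_coe, hleft,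
    Finset.card_image_of_injOn hsnd] at hcardf
  have := (Finset.card_le_univ (Finset.univ.image f).toRight).trans_eq (Fintype.card_fin d)
  omega

/-- König's theorem: for `X ⊆ U` of maximal deficiency `|X| - |N(X)|`, the cover
`(U \ X) ∪ N(X)` has size `|U|` minus that deficiency. -/
theorem exists_isMatchingSet_isVertexCover_card_le (hUc : G.IsVertexCover U)
    (hUi : G.IsIndepSet U) : ∃ (M : Finset (Sym2 W)) (C : Finset W),
      IsMatchingSet G M ∧ G.IsVertexCover (C : Set W) ∧ C.card ≤ M.card := by
  obtain ⟨X, hXU, hXmax⟩ := U.powerset.exists_max_image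
    (fun X => (X.card : ℤ) - (G.neighborhood X).card) ⟨∅, Finset.empty_mem_powerset U⟩
  rw [Finset.mem_powerset] at hXU
  have h₀ : (G.neighborhood X).card ≤ X.card := by
    have := hXmax ∅ (Finset.empty_mem_powerset U)
    rw [show G.neighborhood ∅ = ∅ from Finset.biUnion_empty, Finset.card_empty] at this
    omega
  obtain ⟨M, hM, hUM⟩ := exists_isMatchingSet_of_card_le_card_neighborhood_add hUi
    (X.card - (G.neighborhood X).card) fun Y hY => by
      have := hXmax Y (Finset.mem_powerset.2 hY)
      omega
  refine ⟨M, U \ X ∪ G.neighborhood X, hM, fun v w hvw => ?_, ?_⟩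
  · have key : ∀ v w, G.Adj v w → v ∈ U → v ∈ U \ X ∪ G.neighborhood X ∨
        w ∈ U \ X ∪ G.neighborhood X := by
      intro v w hvw hv
      by_cases hvX : v ∈ X
      · exact Or.inr (Finset.mem_union_right _ (SimpleGraph.mem_neighborhood.2 ⟨v, hvX, hvw⟩))
      · exact Or.inl (Finset.mem_union_left _ (Finset.mem_sdiff.2 ⟨hv, hvX⟩))
    simp only [Finset.mem_coe]
    rcases hUc hvw with hv | hw
    exacts [key v w hvw hv, (key w v hvw.symm hw).symm]
  · have := Finset.card_union_le (U \ X) (G.neighborhood X)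
    have := Finset.card_sdiff_of_subset hXU
    have := Finset.card_le_card hXU
    omega

end

/-- A connected bipartite graph with bipartition `U ∪ V`, `|U| ≤ |V|`, is equimatchable
iff every maximal matching saturates every vertex of `U`. -/
theorem equimatchable_iff_saturates {W : Type*} [Fintype W] [DecidableEq W]
    (G : SimpleGraph W) (U V : Finset W)
    (hdisj : Disjoint U V) (hcover : U ∪ V = Finset.univ)
    (hbip : ∀ a b : W, G.Adj a b → (a ∈ U ∧ b ∈ V) ∨ (a ∈ V ∧ b ∈ U))
    (hconn : G.Connected) (hcard : U.card ≤ V.card) :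
    Equimatchable G ↔
      ∀ M : Finset (Sym2 W), IsMaximalMatching G M → ∀ u ∈ U, ∃ e ∈ M, u ∈ e := by
  classical
  have hUV : G.IsBipartiteWith U V := ⟨Finset.disjoint_coe.2 hdisj, fun a b hab => hbip a b hab⟩
  have hUc := hUV.isVertexCover_left
  have hUi := hUV.isIndepSet_left
  have hVU : Uᶜ = V := (isCompl_iff.2 ⟨hdisj, codisjoint_iff.2 hcover⟩).compl_eq
  refine ⟨fun hG M hM u hu => ?_, fun hsat M₁ M₂ h₁ h₂ => ?_⟩
  · by_contra hmiss
    have hMU : M.card < U.card :=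
      lt_of_not_ge fun h => hmiss (hM.1.exists_mem_of_card_le hUc h hu)
    obtain ⟨M₀, C, hM₀, hC, hCM₀⟩ := exists_isMatchingSet_isVertexCover_card_le hUc hUi
    have hM₀M : M₀.card = M.card := hG _ _ (hM₀.isMaximalMatching_of_card_le hC hCM₀) hM
    rcases hconn.preconnected.eq_or_eq_compl_of_isIndepSet_of_isVertexCover
      (hG.isIndepSet_of_card_le hM₀ hC hCM₀) hC hUi hUc with hCU | hCV
    · rw [Finset.coe_inj.1 hCU] at hCM₀
      omega
    · rw [← Finset.coe_compl, Finset.coe_inj, hVU] at hCV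
      rw [hCV] at hCM₀
      omega
  · rw [h₁.1.card_eq_of_forall_mem hUc hUi (hsat M₁ h₁),
      h₂.1.card_eq_of_forall_mem hUc hUi (hsat M₂ h₂)]
end

section
/- Let G be a graph and M a matching in G. If G is well-edge-dominated, then G - N_e[M] (the subgraph on edges not in or adjacent to M) is well-edge-dominated. -/
/-- The graph `G - N_e[M]`: delete all edges in or adjacent to an edge of `M`,
i.e. the subgraph on the vertices not saturated by `M`. -/
def deleteClosedEdgeNbhd {V : Type*} (G : SimpleGraph V) (M : Finset (Sym2 V)) :
    SimpleGraph V where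
  Adj a b := G.Adj a b ∧ ∀ f ∈ M, a ∉ f ∧ b ∉ f
  symm := by
    constructor
    intro a b h
    exact ⟨h.1.symm, fun f hf => ⟨(h.2 f hf).2, (h.2 f hf).1⟩⟩
  loopless := ⟨fun a h => G.loopless.irrefl a h.1⟩

/-!
If `F` is a minimal edge dominating set of `G - N_e[M]`, then `F ∪ M` is a minimal edge
dominating set of `G`: `M` dominates every edge meeting a vertex saturated by `M`, the remaining
edges are exactly those of `G - N_e[M]`, and no edge can be dropped, since the edges of `F` avoid
the vertices of `M` and, `M` being a matching, an edge of `M` is dominated by nothing else.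
As `F` and `M` are disjoint, `|F| = |F ∪ M| - |M|`, which is the same for every such `F` when `G`
is well-edge-dominated.
-/

section

variable {V : Type*} {G : SimpleGraph V} {M F A B : Finset (Sym2 V)}

theorem IsEDS.mono (hA : IsEDS G A) (hAB : A ⊆ B) (hB : ↑B ⊆ G.edgeSet) : IsEDS G B :=
  ⟨hB, fun e he => by
    obtain ⟨f, hf, hv⟩ := hA.2 e he
    exact ⟨f, hAB hf, hv⟩⟩

theorem mem_edgeSet_deleteClosedEdgeNbhd {e : Sym2 V} :
    e ∈ (deleteClosedEdgeNbhd G M).edgeSet ↔ e ∈ G.edgeSet ∧ ∀ f ∈ M, ∀ v ∈ e, v ∉ f := by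
  induction e with
  | h a b =>
    simp only [SimpleGraph.mem_edgeSet, deleteClosedEdgeNbhd, Sym2.mem_iff,
      forall_eq_or_imp, forall_eq]

theorem disjoint_of_coe_subset_edgeSet_deleteClosedEdgeNbhd
    (hF : ↑F ⊆ (deleteClosedEdgeNbhd G M).edgeSet) : Disjoint F M := by
  refine Finset.disjoint_left.mpr fun e heF heM => ?_
  induction e with
  | h a b =>
    exact (mem_edgeSet_deleteClosedEdgeNbhd.mp (hF heF)).2 _ heM a
      (Sym2.mem_mk_left a b) (Sym2.mem_mk_left a b)

variable [DecidableEq V]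

theorem isMinEDS_of_forall_not_isEDS_erase (hF : IsEDS G F)
    (hmin : ∀ e ∈ F, ¬ IsEDS G (F.erase e)) : IsMinEDS G F := by
  refine ⟨hF, fun F' hF' hF'eds => ?_⟩
  obtain ⟨e, heF, heF'⟩ := Finset.exists_of_ssubset hF'
  refine hmin e heF (hF'eds.mono ?_ fun x hx => hF.1 (Finset.erase_subset e F hx))
  exact fun x hx => Finset.mem_erase.mpr ⟨fun hxe => heF' (hxe ▸ hx), hF'.1 hx⟩

theorem IsEDS.union_of_deleteClosedEdgeNbhd (hF : IsEDS (deleteClosedEdgeNbhd G M) F)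
    (hM : ↑M ⊆ G.edgeSet) : IsEDS G (F ∪ M) := by
  refine ⟨?_, fun e he => ?_⟩
  · rw [Finset.coe_union]
    exact Set.union_subset (fun x hx => (mem_edgeSet_deleteClosedEdgeNbhd.mp (hF.1 hx)).1) hM
  by_cases hmeet : ∃ f ∈ M, ∃ v, v ∈ e ∧ v ∈ f
  · obtain ⟨f, hf, hv⟩ := hmeet
    exact ⟨f, Finset.mem_union_right F hf, hv⟩
  · push Not at hmeet
    obtain ⟨f, hf, hv⟩ :=
      hF.2 e (mem_edgeSet_deleteClosedEdgeNbhd.mpr ⟨he, fun f hf v hv => hmeet f hf v hv⟩)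
    exact ⟨f, Finset.mem_union_left M hf, hv⟩

theorem IsEDS.of_union_deleteClosedEdgeNbhd (h : IsEDS G (A ∪ M))
    (hA : ↑A ⊆ (deleteClosedEdgeNbhd G M).edgeSet) : IsEDS (deleteClosedEdgeNbhd G M) A := by
  refine ⟨hA, fun e he => ?_⟩
  have he' := mem_edgeSet_deleteClosedEdgeNbhd.mp he
  obtain ⟨f, hf, v, hve, hvf⟩ := h.2 e he'.1
  refine ⟨f, (Finset.mem_union.mp hf).resolve_right fun hfM => ?_, v, hve, hvf⟩
  exact he'.2 f hfM v hve hvf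

theorem not_isEDS_erase_union_of_mem (hM : IsMatchingSet G M)
    (hF : ↑F ⊆ (deleteClosedEdgeNbhd G M).edgeSet) {e : Sym2 V} (he : e ∈ M) :
    ¬ IsEDS G ((F ∪ M).erase e) := by
  intro h
  obtain ⟨f, hf, v, hve, hvf⟩ := h.2 e (hM.1 he)
  obtain ⟨hfe, hfFM⟩ := Finset.mem_erase.mp hf
  rcases Finset.mem_union.mp hfFM with hfF | hfM
  · exact (mem_edgeSet_deleteClosedEdgeNbhd.mp (hF hfF)).2 e he v hvf hve
  · exact hM.2 e he f hfM (Ne.symm hfe) v ⟨hve, hvf⟩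

theorem IsMinEDS.union_of_deleteClosedEdgeNbhd (hM : IsMatchingSet G M)
    (hF : IsMinEDS (deleteClosedEdgeNbhd G M) F) : IsMinEDS G (F ∪ M) := by
  refine isMinEDS_of_forall_not_isEDS_erase (hF.1.union_of_deleteClosedEdgeNbhd hM.1)
    fun e he => ?_
  rcases Finset.mem_union.mp he with heF | heM
  · have heM : e ∉ M := Finset.disjoint_left.mp
      (disjoint_of_coe_subset_edgeSet_deleteClosedEdgeNbhd hF.1.1) heF
    intro h
    rw [Finset.erase_union_distrib, Finset.erase_eq_of_notMem heM] at h
    exact hF.2 _ (Finset.erase_ssubset heF) (h.of_union_deleteClosedEdgeNbhd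
      fun x hx => hF.1.1 (Finset.erase_subset e F hx))
  · exact not_isEDS_erase_union_of_mem hM hF.1.1 heM

end

/-- If `G` is well-edge-dominated and `M` is a matching in `G`, then `G - N_e[M]`
is well-edge-dominated. -/
theorem wed_deleteClosedEdgeNbhd {V : Type*} (G : SimpleGraph V)
    (M : Finset (Sym2 V)) (hM : IsMatchingSet G M) (hG : WellEdgeDominated G) :
    WellEdgeDominated (deleteClosedEdgeNbhd G M) := by
  classical
  intro F₁ F₂ h₁ h₂
  have hcard := hG _ _ (h₁.union_of_deleteClosedEdgeNbhd hM) (h₂.union_of_deleteClosedEdgeNbhd hM)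
  rwa [Finset.card_union_of_disjoint (disjoint_of_coe_subset_edgeSet_deleteClosedEdgeNbhd h₁.1.1),
    Finset.card_union_of_disjoint (disjoint_of_coe_subset_edgeSet_deleteClosedEdgeNbhd h₂.1.1),
    Nat.add_right_cancel_iff] at hcard
end

section
/- Let G be a graph obtained from the disjoint union of a triangle xyz and a connected well-edge-dominated bipartite graph G' = (A ∪ B, E') with |A| < |B| by identifying z with a vertex w ∈ B such that G' − w is also well-edge-dominated. Then every minimal edge dominating set of G has cardinality |A| + 1; in particular G is well-edge-dominated. -/
/-- The graph obtained from `G'` by adding a triangle through the vertex `w`: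
two new vertices `x, y` (the two elements of `Fin 2`) joined to each other and to `w`. -/
def attachTriangle {W : Type*} (G' : SimpleGraph W) (w : W) : SimpleGraph (W ⊕ Fin 2) :=
  SimpleGraph.fromRel (fun a b =>
    match a, b with
    | Sum.inl u, Sum.inl v => G'.Adj u v
    | Sum.inl u, Sum.inr _ => u = w
    | Sum.inr _, Sum.inl v => v = w
    | Sum.inr _, Sum.inr _ => True)

open Finset SimpleGraph Function

section

variable {V W : Type*}

section EdgeDomination

theorem IsMaximalMatching.isMinEDS {G : SimpleGraph V} {M : Finset (Sym2 V)}
    (hM : IsMaximalMatching G M) : IsMinEDS G M := by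
  refine ⟨⟨hM.1.1, hM.2⟩, fun F hF hFeds => ?_⟩
  obtain ⟨e, heM, heF⟩ := exists_of_ssubset hF
  obtain ⟨f, hf, v, hve, hvf⟩ := hFeds.2 e (hM.1.1 heM)
  exact hM.1.2 e heM f (hF.subset hf) (by rintro rfl; exact heF hf) v ⟨hve, hvf⟩

theorem WellEdgeDominated.equimatchable {G : SimpleGraph V} (hG : WellEdgeDominated G) :
    Equimatchable G :=
  fun _ _ h₁ h₂ => hG _ _ h₁.isMinEDS h₂.isMinEDS

theorem exists_mem_sym2Map_iff (f : V ↪ W) (e g : Sym2 V) :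
    (∃ v, v ∈ f.sym2Map e ∧ v ∈ f.sym2Map g) ↔ ∃ v, v ∈ e ∧ v ∈ g := by
  simp only [Embedding.sym2Map_apply, Sym2.mem_map]
  constructor
  · rintro ⟨-, ⟨a, ha, rfl⟩, b, hb, hab⟩
    exact ⟨a, ha, f.injective hab ▸ hb⟩
  · rintro ⟨a, ha, hb⟩
    exact ⟨f a, ⟨a, ha, rfl⟩, a, hb, rfl⟩

theorem isEDS_map_iff (f : V ↪ W) {G : SimpleGraph V} {F : Finset (Sym2 V)} :
    IsEDS (G.map f) (F.map f.sym2Map) ↔ IsEDS G F := by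
  simp only [IsEDS, edgeSet_map, coe_map, Set.image_subset_image_iff f.sym2Map.injective,
    Set.forall_mem_image, mem_map, exists_exists_and_eq_and, exists_mem_sym2Map_iff]

theorem IsMinEDS.exists_of_map {f : V ↪ W} {G : SimpleGraph V} {F : Finset (Sym2 W)}
    (hF : IsMinEDS (G.map f) F) : ∃ F₀ : Finset (Sym2 V), IsMinEDS G F₀ ∧ F₀.card = F.card := by
  classical
  obtain ⟨F₀, -, rfl⟩ := subset_set_image_iff.mp (edgeSet_map f G ▸ hF.1.1)
  rw [← map_eq_image] at hF ⊢
  refine ⟨F₀, ⟨(isEDS_map_iff f).mp hF.1, fun F₁ hF₁ hF₁eds => ?_⟩, (card_map _).symm⟩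
  exact hF.2 _ (map_ssubset_map.mpr hF₁) ((isEDS_map_iff f).mpr hF₁eds)

theorem WellEdgeDominated.map {G : SimpleGraph V} (hG : WellEdgeDominated G) (f : V ↪ W) :
    WellEdgeDominated (G.map f) := by
  intro F₁ F₂ h₁ h₂
  obtain ⟨F₁', h₁', hc₁⟩ := h₁.exists_of_map
  obtain ⟨F₂', h₂', hc₂⟩ := h₂.exists_of_map
  rw [← hc₁, ← hc₂]
  exact hG _ _ h₁' h₂'

theorem IsMinEDS.isMinEDS_erase [DecidableEq V] {G K : SimpleGraph V} {F : Finset (Sym2 V)}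
    {t : Sym2 V} (hF : IsMinEDS G F) (ht : t ∈ F) (hKG : K ≤ G)
    (hsub : ↑(F.erase t) ⊆ K.edgeSet)
    (hdomK : ∀ e ∈ K.edgeSet, ∃ f ∈ F.erase t, ∃ v, v ∈ e ∧ v ∈ f)
    (hdomt : ∀ e ∈ G.edgeSet, e ∉ K.edgeSet → ∃ v, v ∈ e ∧ v ∈ t) :
    IsMinEDS K (F.erase t) := by
  refine ⟨⟨hsub, hdomK⟩, fun F' hF' hF'eds => hF.2 (insert t F') ?_ ⟨?_, fun e he => ?_⟩⟩
  · obtain ⟨x, hx, hxF'⟩ := exists_of_ssubset hF'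
    refine (ssubset_iff_of_subset (insert_subset ht (hF'.subset.trans (erase_subset _ _)))).mpr
      ⟨x, mem_of_mem_erase hx, ?_⟩
    simp [ne_of_mem_erase hx, hxF']
  · rw [coe_insert, Set.insert_subset_iff]
    exact ⟨hF.1.1 ht, hF'eds.1.trans (edgeSet_mono hKG)⟩
  · by_cases heK : e ∈ K.edgeSet
    · obtain ⟨f, hf, hef⟩ := hF'eds.2 e heK
      exact ⟨f, mem_insert_of_mem hf, hef⟩
    · exact ⟨t, mem_insert_self _ _, hdomt e he heK⟩

end EdgeDomination

section Matching

variable {K : SimpleGraph V} {M N : Finset (Sym2 V)} {u v : V}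

def Saturates (M : Finset (Sym2 V)) (v : V) : Prop := ∃ e ∈ M, v ∈ e

theorem Saturates.exists_mk (h : Saturates M v) : ∃ u, s(v, u) ∈ M := by
  obtain ⟨e, he, hve⟩ := h
  obtain ⟨u, rfl⟩ := Sym2.mem_iff_exists.mp hve
  exact ⟨u, he⟩

theorem saturates_insert [DecidableEq V] {e : Sym2 V} :
    Saturates (insert e M) v ↔ v ∈ e ∨ Saturates M v := by
  simp [Saturates]

theorem IsMatchingSet.subset_s19 (hM : IsMatchingSet K M) (hNM : N ⊆ M) : IsMatchingSet K N :=
  ⟨(coe_subset.mpr hNM).trans hM.1, fun e he f hf => hM.2 e (hNM he) f (hNM hf)⟩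

theorem IsMatchingSet.mono {K' : SimpleGraph V} (hM : IsMatchingSet K M) (hKK' : K ≤ K') :
    IsMatchingSet K' M :=
  ⟨hM.1.trans (edgeSet_mono hKK'), hM.2⟩

theorem IsMatchingSet.eq_of_mem (hM : IsMatchingSet K M) {e f : Sym2 V} (he : e ∈ M)
    (hf : f ∈ M) (hve : v ∈ e) (hvf : v ∈ f) : e = f :=
  Classical.byContradiction fun hne => hM.2 e he f hf hne v ⟨hve, hvf⟩

theorem IsMatchingSet.saturates_erase [DecidableEq V] (hM : IsMatchingSet K M) {e : Sym2 V}
    (he : e ∈ M) : Saturates (M.erase e) v ↔ Saturates M v ∧ v ∉ e := by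
  constructor
  · rintro ⟨f, hf, hvf⟩
    exact ⟨⟨f, mem_of_mem_erase hf, hvf⟩,
      fun hve => ne_of_mem_erase hf (hM.eq_of_mem (mem_of_mem_erase hf) he hvf hve)⟩
  · rintro ⟨⟨f, hf, hvf⟩, hve⟩
    exact ⟨f, mem_erase.mpr ⟨by rintro rfl; exact hve hvf, hf⟩, hvf⟩

theorem IsMatchingSet.insert_edge [DecidableEq V] (hM : IsMatchingSet K M) (huv : K.Adj u v)
    (hu : ¬ Saturates M u) (hv : ¬ Saturates M v) : IsMatchingSet K (insert s(u, v) M) := by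
  have hfree : ∀ f ∈ M, ∀ x, x ∈ s(u, v) → x ∉ f := by
    intro f hf x hx hxf
    rcases Sym2.mem_iff.mp hx with rfl | rfl
    · exact hu ⟨f, hf, hxf⟩
    · exact hv ⟨f, hf, hxf⟩
  refine ⟨?_, fun e he f hf hef x hx => ?_⟩
  · rw [coe_insert, Set.insert_subset_iff]
    exact ⟨huv, hM.1⟩
  rcases mem_insert.mp he with rfl | he <;> rcases mem_insert.mp hf with rfl | hf
  · exact hef rfl
  · exact hfree f hf x hx.1 hx.2
  · exact hfree e he x hx.2 hx.1
  · exact hM.2 e he f hf hef x hx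

theorem card_insert_mk_of_not_saturates [DecidableEq V] (hu : ¬ Saturates M u) :
    (insert s(u, v) M).card = M.card + 1 :=
  card_insert_of_notMem fun h => hu ⟨_, h, Sym2.mem_mk_left u v⟩

theorem isMaximalMatching_iff :
    IsMaximalMatching K M ↔
      IsMatchingSet K M ∧ ∀ u v, K.Adj u v → Saturates M u ∨ Saturates M v := by
  refine and_congr_right fun _ => ⟨fun h u v huv => ?_, fun h e he => ?_⟩
  · obtain ⟨f, hf, x, hx, hxf⟩ := h s(u, v) huv
    rcases Sym2.mem_iff.mp hx with rfl | rfl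
    · exact Or.inl ⟨f, hf, hxf⟩
    · exact Or.inr ⟨f, hf, hxf⟩
  · induction e with
    | _ u v =>
      rcases h u v he with ⟨f, hf, hu⟩ | ⟨f, hf, hv⟩
      · exact ⟨f, hf, u, Sym2.mem_mk_left u v, hu⟩
      · exact ⟨f, hf, v, Sym2.mem_mk_right u v, hv⟩

theorem IsMatchingSet.exists_isMaximalMatching_superset [Finite V] (hM : IsMatchingSet K M) :
    ∃ N, M ⊆ N ∧ IsMaximalMatching K N := by
  classical
  obtain ⟨N, hN⟩ := Set.Finite.exists_maximal (s := {N | M ⊆ N ∧ IsMatchingSet K N})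
    (Set.toFinite _) ⟨M, subset_rfl, hM⟩
  refine ⟨N, hN.prop.1, isMaximalMatching_iff.mpr ⟨hN.prop.2, fun u v huv => ?_⟩⟩
  by_contra! hfree
  have hmem := hN.2 ⟨hN.prop.1.trans (subset_insert _ _), hN.prop.2.insert_edge huv hfree.1 hfree.2⟩
    (subset_insert _ _)
  exact hfree.1 ⟨_, hmem (mem_insert_self _ _), Sym2.mem_mk_left u v⟩

theorem exists_isMaximalMatching [Finite V] (K : SimpleGraph V) : ∃ M, IsMaximalMatching K M := by
  obtain ⟨M, -, hM⟩ := IsMatchingSet.exists_isMaximalMatching_superset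
    (K := K) (M := ∅) ⟨by simp, by simp⟩
  exact ⟨M, hM⟩

theorem Equimatchable.card_le [Finite V] (hK : Equimatchable K) (hM : IsMaximalMatching K M)
    (hN : IsMatchingSet K N) : N.card ≤ M.card := by
  obtain ⟨N', hNN', hN'⟩ := hN.exists_isMaximalMatching_superset
  exact (card_le_card hNN').trans (hK N' M hN' hM).le

end Matching

section Bipartite

variable {K : SimpleGraph V} {M : Finset (Sym2 V)} {s t : Set V}

theorem SimpleGraph.IsBipartiteWith.eq_of_mem_of_mem (hK : K.IsBipartiteWith s t) {e : Sym2 V}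
    (he : e ∈ K.edgeSet) {x y : V} (hx : x ∈ e) (hy : y ∈ e) (hxs : x ∈ s) (hys : y ∈ s) :
    x = y := by
  induction e with
  | _ u v =>
    have hne : ∀ {a b}, K.Adj a b → a ∈ s → b ∉ s := fun hab ha hb =>
      Set.disjoint_left.mp hK.disjoint hb (hK.mem_of_mem_adj ha hab)
    rcases Sym2.mem_iff.mp hx with rfl | rfl <;> rcases Sym2.mem_iff.mp hy with rfl | rfl
    · rfl
    · exact absurd hys (hne he hxs)
    · exact absurd hxs (hne he hys)
    · rfl

theorem IsMatchingSet.card_le_of_isBipartiteWith {A : Finset V} (hM : IsMatchingSet K M)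
    (hK : K.IsBipartiteWith ↑A t) : M.card ≤ A.card := by
  refine card_le_card_of_forall_subsingleton (fun e a => a ∈ e) (fun e he => ?_)
    fun a _ e₁ he₁ e₂ he₂ => hM.eq_of_mem he₁.1 he₂.1 he₁.2 he₂.2
  have hK' := hM.1 he
  induction e with
  | _ u v =>
    rcases hK.mem_of_adj hK' with ⟨hu, -⟩ | ⟨-, hv⟩
    · exact ⟨u, hu, Sym2.mem_mk_left u v⟩
    · exact ⟨v, hv, Sym2.mem_mk_right u v⟩

theorem IsMatchingSet.card_le_of_saturates {S : Finset V} (hM : IsMatchingSet K M)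
    (hK : K.IsBipartiteWith s t) (hS : ↑S ⊆ s) (h : ∀ v ∈ S, Saturates M v) :
    S.card ≤ M.card :=
  card_le_card_of_forall_subsingleton (fun v e => v ∈ e) h
    fun _ he _ hx _ hy => hK.eq_of_mem_of_mem (hM.1 he) hx.2 hy.2 (hS hx.1) (hS hy.1)

end Bipartite

section Alternating

variable [DecidableEq V] {K : SimpleGraph V} {A B : Set V} {M N : Finset (Sym2 V)} {x : V}

/-- `N` is obtained by switching `M` along an `M`-alternating walk that starts at an unsaturated
vertex of `A` and ends at `x`, which `N` leaves unsaturated. -/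
inductive AltReach (K : SimpleGraph V) (A : Set V) (M : Finset (Sym2 V)) :
    V → Finset (Sym2 V) → Prop
  | base {a : V} : a ∈ A → ¬ Saturates M a → AltReach K A M a M
  | swap {x p c : V} {N : Finset (Sym2 V)} : AltReach K A M x N → K.Adj x p → s(p, c) ∈ N →
      AltReach K A M c (insert s(x, p) (N.erase s(p, c)))

theorem AltReach.spec (hK : K.IsBipartiteWith A B) (hM : IsMatchingSet K M)
    (h : AltReach K A M x N) :
    x ∈ A ∧ IsMatchingSet K N ∧ ¬ Saturates N x ∧ N.card = M.card ∧
      ∀ v ∈ B, (Saturates N v ↔ Saturates M v) := by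
  induction h with
  | base ha hua => exact ⟨ha, hM, hua, rfl, fun _ _ => Iff.rfl⟩
  | @swap x p c N _ hxp hpc ih =>
    obtain ⟨hxA, hN, hxN, hcard, hB⟩ := ih
    have hpB : p ∈ B := hK.mem_of_mem_adj hxA hxp
    have hcA : c ∈ A := hK.symm.mem_of_mem_adj hpB (hN.1 hpc)
    have hAB : ∀ {v}, v ∈ A → v ∉ B := fun hv => Set.disjoint_left.mp hK.disjoint hv
    have hsat : ∀ v, Saturates (insert s(x, p) (N.erase s(p, c))) v ↔
        v ∈ s(x, p) ∨ (Saturates N v ∧ v ∉ s(p, c)) := fun v => by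
      rw [saturates_insert, hN.saturates_erase hpc]
    have hpN : Saturates N p := ⟨_, hpc, Sym2.mem_mk_left p c⟩
    refine ⟨hcA, (hN.subset_s19 (erase_subset _ _)).insert_edge hxp ?_ ?_, ?_, ?_, fun v hv => ?_⟩
    · rw [hN.saturates_erase hpc]; exact fun h => hxN h.1
    · rw [hN.saturates_erase hpc]; exact fun h => h.2 (Sym2.mem_mk_left p c)
    · rw [hsat]
      rintro (hc | ⟨-, hc⟩)
      · rcases Sym2.mem_iff.mp hc with rfl | rfl
        · exact hxN ⟨_, hpc, Sym2.mem_mk_right p c⟩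
        · exact hAB hcA hpB
      · exact hc (Sym2.mem_mk_right p c)
    · rw [card_insert_mk_of_not_saturates, card_erase_of_mem hpc, ← hcard]
      · have := card_pos.mpr ⟨_, hpc⟩
        omega
      · rw [hN.saturates_erase hpc]; exact fun h => hxN h.1
    · rw [hsat, ← hB v hv]
      have hvx : v ≠ x := fun h => hAB hxA (h ▸ hv)
      have hvc : v ≠ c := fun h => hAB hcA (h ▸ hv)
      simp only [Sym2.mem_iff, hvx, hvc, false_or, or_false]
      constructor
      · rintro (rfl | ⟨h, -⟩) <;> assumption
      · intro h
        by_cases hvp : v = p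
        · exact Or.inl hvp
        · exact Or.inr ⟨h, hvp⟩

/-- An `M`-edge missing from `N` was removed by a swap, which reached its `A`-endpoint. -/
theorem AltReach.exists_of_mem_sdiff (hK : K.IsBipartiteWith A B) (hM : IsMatchingSet K M)
    (h : AltReach K A M x N) {p c : V} (hpcM : s(p, c) ∈ M) (hpcN : s(p, c) ∉ N) (hc : c ∈ A) :
    ∃ N', AltReach K A M c N' := by
  induction h with
  | base => exact absurd hpcM hpcN
  | @swap x p₀ c₀ N hxN hxp hpc ih =>
    by_cases hN : s(p, c) ∈ N
    · have heq : s(p, c) = s(p₀, c₀) := by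
        by_contra hne
        exact hpcN (mem_insert_of_mem (mem_erase.mpr ⟨hne, hN⟩))
      have hp₀B : p₀ ∈ B := hK.mem_of_mem_adj (hxN.spec hK hM).1 hxp
      have hcc₀ : c = c₀ := by
        rcases Sym2.mem_iff.mp (heq ▸ Sym2.mem_mk_right p c : c ∈ s(p₀, c₀)) with h | h
        · exact absurd (h ▸ hp₀B) (Set.disjoint_left.mp hK.disjoint hc)
        · exact h
      exact hcc₀ ▸ ⟨_, hxN.swap hxp hpc⟩
    · exact ih hN

theorem AltReach.exists_of_adj (hK : K.IsBipartiteWith A B) (hM : IsMatchingSet K M)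
    (h : AltReach K A M x N) {p c : V} (hxp : K.Adj x p) (hpc : s(p, c) ∈ M) :
    ∃ N', AltReach K A M c N' := by
  by_cases hpcN : s(p, c) ∈ N
  · exact ⟨_, h.swap hxp hpcN⟩
  · exact h.exists_of_mem_sdiff hK hM hpc hpcN
      (hK.symm.mem_of_mem_adj (hK.mem_of_mem_adj (h.spec hK hM).1 hxp) (hM.1 hpc))

theorem AltReach.saturates_of_adj [Finite V] (hequi : Equimatchable K)
    (hK : K.IsBipartiteWith A B) (hM : IsMaximalMatching K M) (h : AltReach K A M x N)
    {v : V} (hxv : K.Adj x v) : Saturates M v := by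
  obtain ⟨hxA, hN, hxN, hcard, hB⟩ := h.spec hK hM.1
  have hvB : v ∈ B := hK.mem_of_mem_adj hxA hxv
  by_contra hvM
  have hvN : ¬ Saturates N v := (hB v hvB).not.mpr hvM
  have := hequi.card_le hM (hN.insert_edge hxv hxN hvN)
  rw [card_insert_mk_of_not_saturates hxN] at this
  omega

end Alternating

section Exchange

variable [DecidableEq V] {K : SimpleGraph V} {A B : Set V} {M : Finset (Sym2 V)}

theorem IsMatchingSet.exists_exchange (hM : IsMatchingSet K M) {p p' q q' : V}
    (hp : s(p, p') ∈ M) (hq : s(q, q') ∈ M) (hne : s(p, p') ≠ s(q, q')) (hpq : K.Adj p q) :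
    ∃ M', IsMatchingSet K M' ∧ M'.card + 1 = M.card ∧
      ∀ v, Saturates M' v ↔ v ∈ s(p, q) ∨ (Saturates M v ∧ v ∉ s(p, p') ∧ v ∉ s(q, q')) := by
  set M₁ := (M.erase s(p, p')).erase s(q, q')
  have hq₁ : s(q, q') ∈ M.erase s(p, p') := mem_erase.mpr ⟨hne.symm, hq⟩
  have hsat₁ : ∀ v, Saturates M₁ v ↔ Saturates M v ∧ v ∉ s(p, p') ∧ v ∉ s(q, q') := fun v => by
    rw [(hM.subset_s19 (erase_subset _ _)).saturates_erase hq₁, hM.saturates_erase hp, and_assoc]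
  have hp₁ : ¬ Saturates M₁ p := by
    rw [hsat₁]; exact fun h => h.2.1 (Sym2.mem_mk_left p p')
  have hq₁' : ¬ Saturates M₁ q := by
    rw [hsat₁]; exact fun h => h.2.2 (Sym2.mem_mk_left q q')
  refine ⟨insert s(p, q) M₁,
    (hM.subset_s19 ((erase_subset _ _).trans (erase_subset _ _))).insert_edge hpq hp₁ hq₁', ?_,
    fun v => by rw [saturates_insert, hsat₁]⟩
  rw [card_insert_mk_of_not_saturates hp₁, card_erase_of_mem hq₁, card_erase_of_mem hp]
  have : 1 < M.card := one_lt_card.mpr ⟨_, hp, _, hq, hne⟩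
  omega

/-- Replacing the matching edges at `p ∈ T` and at `q ∉ S` by `p q` would give a maximal matching
with fewer edges. -/
theorem Equimatchable.mem_of_adj_of_closed [Finite V] (hequi : Equimatchable K)
    (hK : K.IsBipartiteWith A B) (hM : IsMaximalMatching K M) {S T : Set V} (hSA : S ⊆ A)
    (hTB : T ⊆ B) (hunsat : ∀ a ∈ A, ¬ Saturates M a → a ∈ S)
    (hST : ∀ x ∈ S, ∀ v, K.Adj x v → v ∈ T) (hTsat : ∀ v ∈ T, Saturates M v)
    (hTS : ∀ v ∈ T, ∀ c, s(v, c) ∈ M → c ∈ S) {p q : V} (hpT : p ∈ T) (hpq : K.Adj p q) :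
    q ∈ S := by
  by_contra hqS
  have hAB : ∀ {v}, v ∈ A → v ∉ B := fun hv => Set.disjoint_left.mp hK.disjoint hv
  have hqA : q ∈ A := hK.symm.mem_of_mem_adj (hTB hpT) hpq
  obtain ⟨p', hpp'⟩ := (hTsat p hpT).exists_mk
  have hp'S : p' ∈ S := hTS p hpT p' hpp'
  obtain ⟨q', hqq'⟩ := (not_not.mp fun h => hqS (hunsat q hqA h) : Saturates M q).exists_mk
  have hq'B : q' ∈ B := hK.mem_of_mem_adj hqA (hM.1.1 hqq')
  have hq'T : q' ∉ T := fun h => hqS (hTS q' h q (Sym2.eq_swap ▸ hqq'))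
  have hne : s(p, p') ≠ s(q, q') := fun h => by
    rcases Sym2.mem_iff.mp (h ▸ Sym2.mem_mk_left p p' : p ∈ s(q, q')) with rfl | rfl
    · exact hAB hqA (hTB hpT)
    · exact hq'T hpT
  obtain ⟨M', hM', hcard, hsat⟩ := hM.1.exists_exchange hpp' hqq' hne hpq
  have hT' : ∀ v ∈ T, Saturates M' v := by
    intro v hv
    have hvB := hTB hv
    rw [hsat]
    by_cases hvp : v = p
    · exact Or.inl (hvp ▸ Sym2.mem_mk_left p q)
    refine Or.inr ⟨hTsat v hv, ?_, ?_⟩ <;> rw [Sym2.mem_iff] <;> rintro (rfl | rfl)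
    · exact hvp rfl
    · exact hAB (hSA hp'S) hvB
    · exact hAB hqA hvB
    · exact hq'T hv
  have hS' : ∀ u ∈ A, ¬ Saturates M' u → u ∈ S := by
    intro u hu hu'
    by_cases huM : Saturates M u
    · simp only [hsat, huM, true_and, not_or, not_and_or, not_not, Sym2.mem_iff] at hu'
      obtain ⟨⟨-, huq⟩, (rfl | rfl) | (rfl | rfl)⟩ := hu'
      · exact absurd (hTB hpT) (hAB hu)
      · exact hp'S
      · exact absurd rfl huq
      · exact absurd hq'B (hAB hu)
    · exact hunsat u hu huM
  have hM'max : IsMaximalMatching K M' := by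
    refine isMaximalMatching_iff.mpr ⟨hM', fun u v huv => ?_⟩
    rcases hK.mem_of_adj huv with ⟨hu, -⟩ | ⟨-, hv⟩
    · by_cases hu' : Saturates M' u
      · exact Or.inl hu'
      · exact Or.inr (hT' v (hST u (hS' u hu hu') v huv))
    · by_cases hv' : Saturates M' v
      · exact Or.inr hv'
      · exact Or.inl (hT' u (hST v (hS' v hv hv') u huv.symm))
  have := hequi M M' hM hM'max
  omega

theorem Equimatchable.saturates_of_reachable [Finite V] (hequi : Equimatchable K)
    (hK : K.IsBipartiteWith A B) (hM : IsMaximalMatching K M) {a b : V} (ha : a ∈ A)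
    (hua : ¬ Saturates M a) (hb : b ∈ B) (hab : K.Reachable a b) : Saturates M b := by
  by_contra hub
  set S := {x | ∃ N, AltReach K A M x N}
  set T := {v | ∃ x ∈ S, K.Adj x v}
  have hSA : S ⊆ A := fun _ ⟨_, h⟩ => (h.spec hK hM.1).1
  have hTB : T ⊆ B := fun _ ⟨x, hx, hxv⟩ => hK.mem_of_mem_adj (hSA hx) hxv
  have hTsat : ∀ v ∈ T, Saturates M v := fun _ ⟨_, ⟨_, h⟩, hxv⟩ =>
    h.saturates_of_adj hequi hK hM hxv
  have hTS : ∀ v ∈ T, ∀ c, s(v, c) ∈ M → c ∈ S := fun _ ⟨_, ⟨_, h⟩, hxv⟩ _ hvc =>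
    h.exists_of_adj hK hM.1 hxv hvc
  obtain ⟨⟨⟨p, q⟩, hpq⟩, -, hp, hq⟩ := hab.some.exists_boundary_dart (S ∪ T)
    (Or.inl ⟨M, .base ha hua⟩) fun h =>
      h.elim (fun h => Set.disjoint_left.mp hK.disjoint (hSA h) hb) (fun h => hub (hTsat b h))
  refine hq (hp.elim (fun hpS => Or.inr ⟨p, hpS, hpq⟩) fun hpT => Or.inl ?_)
  exact hequi.mem_of_adj_of_closed hK hM hSA hTB (fun a ha hua => ⟨M, .base ha hua⟩)
    (fun x hx v hxv => ⟨x, hx, hxv⟩) hTsat hTS hpT hpq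

end Exchange

section DeleteVertex

variable {G : SimpleGraph V} {A B : Finset V} {M : Finset (Sym2 V)} {w : V}

theorem SimpleGraph.IsBipartiteWith.mono {H : SimpleGraph V} {s t : Set V}
    (hG : G.IsBipartiteWith s t) (hHG : H ≤ G) : H.IsBipartiteWith s t :=
  ⟨hG.disjoint, fun _ _ h => hG.mem_of_adj (hHG h)⟩

theorem Equimatchable.saturates_of_connected [Finite V] (hequi : Equimatchable G)
    (hG : G.IsBipartiteWith ↑A ↑B) (hconn : G.Connected) (hcard : A.card < B.card)
    (hM : IsMaximalMatching G M) {a : V} (ha : a ∈ A) : Saturates M a := by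
  classical
  by_contra hua
  have hB := hM.1.card_le_of_saturates hG.symm subset_rfl
    fun b hb => hequi.saturates_of_reachable hG hM ha hua hb (hconn a b)
  have hA := hM.1.card_le_of_isBipartiteWith hG
  omega

theorem Equimatchable.card_eq_of_connected [Finite V] (hequi : Equimatchable G)
    (hG : G.IsBipartiteWith ↑A ↑B) (hconn : G.Connected) (hcard : A.card < B.card)
    (hM : IsMaximalMatching G M) : M.card = A.card :=
  (hM.1.card_le_of_isBipartiteWith hG).antisymm
    (hM.1.card_le_of_saturates hG subset_rfl fun _ ha =>
      hequi.saturates_of_connected hG hconn hcard hM ha)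

theorem SimpleGraph.Connected.reachable_deleteIncidenceSet (hconn : G.Connected) {u v : V}
    (h : ∀ x, G.Adj w x → (G.deleteIncidenceSet w).Reachable u x) (hv : v ≠ w) :
    (G.deleteIncidenceSet w).Reachable u v := by
  by_contra huv
  obtain ⟨⟨⟨x, y⟩, hxy⟩, -, hx, hy⟩ := (hconn w v).some.exists_boundary_dart
    {x | x = w ∨ (G.deleteIncidenceSet w).Reachable u x} (Or.inl rfl) (by simp [hv, huv])
  simp only [Set.mem_ofPred_eq, not_or] at hx hy
  by_cases hxw : x = w
  · exact hy.2 (h y (hxw ▸ hxy))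
  · exact hy.2 ((hx.resolve_left hxw).trans
      (deleteIncidenceSet_adj.mpr ⟨hxy, hxw, hy.1⟩).reachable)

theorem SimpleGraph.deleteIncidenceSet_eq_map_induce (G : SimpleGraph V) (w : V) :
    G.deleteIncidenceSet w = (G.induce {v | v ≠ w}).map (Embedding.subtype _) := by
  ext u v
  rw [deleteIncidenceSet_adj, map_adj]
  simp

theorem not_saturates_of_isMatchingSet_deleteIncidenceSet
    (hM : IsMatchingSet (G.deleteIncidenceSet w) M) : ¬ Saturates M w := by
  rintro ⟨e, he, hwe⟩
  have := hM.1 he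
  rw [edgeSet_deleteIncidenceSet] at this
  exact this.2 ⟨this.1, hwe⟩

theorem IsMaximalMatching.of_deleteIncidenceSet [DecidableEq V]
    (hM : IsMaximalMatching (G.deleteIncidenceSet w) M) :
    IsMaximalMatching G M ∨
      ∃ u, G.Adj w u ∧ ¬ Saturates M u ∧ IsMaximalMatching G (insert s(w, u) M) := by
  have hMG : IsMatchingSet G M := hM.1.mono (deleteIncidenceSet_le G w)
  have hwM := not_saturates_of_isMatchingSet_deleteIncidenceSet hM.1
  have hdom : ∀ x y, G.Adj x y → x ≠ w → y ≠ w → Saturates M x ∨ Saturates M y :=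
    fun x y hxy hx hy => (isMaximalMatching_iff.mp hM).2 x y (deleteIncidenceSet_adj.mpr ⟨hxy, hx, hy⟩)
  by_cases hmax : IsMaximalMatching G M
  · exact Or.inl hmax
  refine Or.inr ?_
  simp only [isMaximalMatching_iff, hMG, true_and, not_forall, not_or] at hmax
  obtain ⟨u, hwu, hu⟩ : ∃ u, G.Adj w u ∧ ¬ Saturates M u := by
    obtain ⟨x, y, hxy, hx, hy⟩ := hmax
    by_cases hxw : x = w
    · exact ⟨y, hxw ▸ hxy, hy⟩
    by_cases hyw : y = w
    · exact ⟨x, hyw ▸ hxy.symm, hx⟩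
    exact ((hdom x y hxy hxw hyw).elim hx hy).elim
  refine ⟨u, hwu, hu, isMaximalMatching_iff.mpr ⟨hMG.insert_edge hwu hwM hu, fun x y hxy => ?_⟩⟩
  simp only [saturates_insert]
  by_cases hxw : x = w
  · exact Or.inl (Or.inl (hxw ▸ Sym2.mem_mk_left w u))
  by_cases hyw : y = w
  · exact Or.inr (Or.inl (hyw ▸ Sym2.mem_mk_left w u))
  exact (hdom x y hxy hxw hyw).imp Or.inr Or.inr

/-- Move the `M`-edge at `u''` onto `w u''`. -/
theorem exists_isMaximalMatching_of_not_reachable [DecidableEq V] (hG : G.IsBipartiteWith ↑A ↑B)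
    (hw : w ∈ B) (hM : IsMaximalMatching (G.deleteIncidenceSet w) M) {u u'' : V} (huA : u ∈ A)
    (hu : ¬ Saturates M u) (hA : ∀ a ∈ A, a ≠ u → Saturates M a) (hwu'' : G.Adj w u'')
    (hreach : ¬ (G.deleteIncidenceSet w).Reachable u u'') :
    ∃ M', IsMaximalMatching G M' ∧ M'.card = M.card := by
  have hAB : ∀ {v}, v ∈ A → v ∉ B := fun hv => disjoint_left.mp (disjoint_coe.mp hG.disjoint) hv
  have hu''A : u'' ∈ A := hG.symm.mem_of_mem_adj hw hwu''
  obtain ⟨b'', hb''⟩ :=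
    (hA u'' hu''A fun h => hreach (h ▸ Reachable.refl _)).exists_mk
  have hwM := not_saturates_of_isMatchingSet_deleteIncidenceSet hM.1
  have hsat₁ : ∀ v, Saturates (M.erase s(u'', b'')) v ↔ Saturates M v ∧ v ∉ s(u'', b'') :=
    fun v => hM.1.saturates_erase hb''
  have hw₁ : ¬ Saturates (M.erase s(u'', b'')) w := fun h => hwM ((hsat₁ w).mp h).1
  have hu''₁ : ¬ Saturates (M.erase s(u'', b'')) u'' :=
    fun h => ((hsat₁ u'').mp h).2 (Sym2.mem_mk_left _ _)
  have hsat : ∀ v, Saturates (insert s(w, u'') (M.erase s(u'', b''))) v ↔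
      v ∈ s(w, u'') ∨ (Saturates M v ∧ v ∉ s(u'', b'')) := fun v => by
    rw [saturates_insert, hsat₁]
  have hsatA : ∀ a ∈ A, a ≠ u → Saturates (insert s(w, u'') (M.erase s(u'', b''))) a := by
    intro a ha hau
    rw [hsat]
    by_cases hau'' : a = u''
    · exact Or.inl (hau'' ▸ Sym2.mem_mk_right w u'')
    refine Or.inr ⟨hA a ha hau, ?_⟩
    rw [Sym2.mem_iff]
    rintro (h | rfl)
    · exact hau'' h
    · exact hAB ha (hG.mem_of_mem_adj hu''A (deleteIncidenceSet_le G w (hM.1.1 hb'')))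
  have hsatN : ∀ z, G.Adj u z → Saturates (insert s(w, u'') (M.erase s(u'', b''))) z := by
    intro z huz
    rw [hsat]
    by_cases hzw : z = w
    · exact Or.inl (hzw ▸ Sym2.mem_mk_left w u'')
    have huz' : (G.deleteIncidenceSet w).Adj u z :=
      deleteIncidenceSet_adj.mpr ⟨huz, fun h => hAB huA (h ▸ hw), hzw⟩
    refine Or.inr ⟨((isMaximalMatching_iff.mp hM).2 u z huz').resolve_left hu, fun hz => hreach ?_⟩
    rcases Sym2.mem_iff.mp hz with rfl | rfl
    · exact huz'.reachable
    · exact huz'.reachable.trans (hM.1.1 hb'').symm.reachable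
  refine ⟨_, isMaximalMatching_iff.mpr ⟨((hM.1.mono (deleteIncidenceSet_le G w)).subset_s19
    (erase_subset _ _)).insert_edge hwu'' hw₁ hu''₁, fun x y hxy => ?_⟩, ?_⟩
  · rcases hG.mem_of_adj hxy with ⟨hx, -⟩ | ⟨-, hy⟩
    · by_cases hxu : x = u
      · exact Or.inr (hsatN y (hxu ▸ hxy))
      · exact Or.inl (hsatA x hx hxu)
    · by_cases hyu : y = u
      · exact Or.inl (hsatN x (hyu ▸ hxy.symm))
      · exact Or.inr (hsatA y hy hyu)
  · rw [card_insert_mk_of_not_saturates hw₁, card_erase_of_mem hb'']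
    have := card_pos.mpr ⟨_, hb''⟩
    omega

theorem card_eq_of_isMaximalMatching_deleteIncidenceSet [Finite V] (hG : G.IsBipartiteWith ↑A ↑B)
    (hconn : G.Connected) (hequi : Equimatchable G)
    (hequiH : Equimatchable (G.deleteIncidenceSet w)) (hcard : A.card < B.card) (hw : w ∈ B)
    (hM : IsMaximalMatching (G.deleteIncidenceSet w) M) : M.card = A.card := by
  classical
  obtain hmax | ⟨u, hwu, hu, hN⟩ := hM.of_deleteIncidenceSet
  · exact hequi.card_eq_of_connected hG hconn hcard hmax
  have hNcard := hequi.card_eq_of_connected hG hconn hcard hN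
  rw [card_insert_mk_of_not_saturates (not_saturates_of_isMatchingSet_deleteIncidenceSet hM.1)]
    at hNcard
  have huA : u ∈ A := hG.symm.mem_of_mem_adj hw hwu
  have hA : ∀ a ∈ A, a ≠ u → Saturates M a := fun a ha hau => by
    have := hequi.saturates_of_connected hG hconn hcard hN ha
    rw [saturates_insert, Sym2.mem_iff] at this
    refine this.resolve_left ?_
    rintro (rfl | rfl)
    · exact disjoint_left.mp (disjoint_coe.mp hG.disjoint) ha hw
    · exact hau rfl
  by_cases hreach : ∀ v, G.Adj w v → (G.deleteIncidenceSet w).Reachable u v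
  · have hGH := hG.mono (deleteIncidenceSet_le G w)
    have hB := hM.1.card_le_of_saturates hGH.symm (coe_subset.mpr (erase_subset w B))
      fun b hb => hequiH.saturates_of_reachable hGH hM huA hu (mem_of_mem_erase hb)
        (hconn.reachable_deleteIncidenceSet hreach (ne_of_mem_erase hb))
    rw [card_erase_of_mem hw] at hB
    omega
  · push Not at hreach
    obtain ⟨u'', hwu'', hu''⟩ := hreach
    obtain ⟨M', hM', hcard'⟩ :=
      exists_isMaximalMatching_of_not_reachable hG hw hM huA hu hA hwu'' hu''
    have := hequi.card_eq_of_connected hG hconn hcard hM'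
    omega

end DeleteVertex

section Triangle

variable {G' : SimpleGraph W} {w : W}

theorem attachTriangle_adj_inl_inl {u v : W} :
    (attachTriangle G' w).Adj (.inl u) (.inl v) ↔ G'.Adj u v := by
  simp only [attachTriangle, fromRel_adj, ne_eq, Sum.inl.injEq]
  exact ⟨fun ⟨_, h⟩ => h.elim id .symm, fun h => ⟨h.ne, .inl h⟩⟩

theorem attachTriangle_adj_inl_inr {u : W} {i : Fin 2} :
    (attachTriangle G' w).Adj (.inl u) (.inr i) ↔ u = w := by
  simp [attachTriangle, fromRel_adj]

theorem attachTriangle_adj_inr_inr {i j : Fin 2} :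
    (attachTriangle G' w).Adj (.inr i) (.inr j) ↔ i ≠ j := by
  simp [attachTriangle, fromRel_adj]

theorem map_inl_le_attachTriangle : G'.map Embedding.inl ≤ attachTriangle G' w := by
  rintro _ _ ⟨-, u, v, huv, rfl, rfl⟩
  exact attachTriangle_adj_inl_inl.mpr huv

theorem inr_notMem_of_mem_edgeSet_map_inl {K : SimpleGraph W} {e : Sym2 (W ⊕ Fin 2)}
    (he : e ∈ (K.map Embedding.inl).edgeSet) (i : Fin 2) : .inr i ∉ e := by
  rw [edgeSet_map] at he
  obtain ⟨e₀, -, rfl⟩ := he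
  simp [Sym2.mem_map]

theorem eq_of_inr_mem_of_mem_edgeSet_attachTriangle {e : Sym2 (W ⊕ Fin 2)}
    (he : e ∈ (attachTriangle G' w).edgeSet) {i : Fin 2} (hi : .inr i ∈ e) :
    e = s(.inr i, .inl w) ∨ e = s(.inr 0, .inr 1) := by
  obtain ⟨v, rfl⟩ := Sym2.mem_iff_exists.mp hi
  rcases v with u | j
  · have hadj : (attachTriangle G' w).Adj (.inr i) (.inl u) := he
    obtain rfl : u = w := attachTriangle_adj_inl_inr.mp hadj.symm
    exact Or.inl rfl
  · have hij : i ≠ j := (attachTriangle_adj_inr_inr (G' := G') (w := w)).mp he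
    fin_cases i <;> fin_cases j <;> simp_all [Sym2.eq_swap]

theorem mem_edgeSet_map_inl_of_mem_edgeSet_attachTriangle {e : Sym2 (W ⊕ Fin 2)}
    (he : e ∈ (attachTriangle G' w).edgeSet) (hinr : ∀ i, .inr i ∉ e) :
    e ∈ (G'.map Embedding.inl).edgeSet := by
  induction e with
  | _ a b =>
    rcases a with u | i
    · rcases b with v | j
      · have hadj : (attachTriangle G' w).Adj (.inl u) (.inl v) := he
        exact (map_adj_apply (f := Embedding.inl)).mpr (attachTriangle_adj_inl_inl.mp hadj)
      · exact absurd (Sym2.mem_mk_right _ _) (hinr j)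
    · exact absurd (Sym2.mem_mk_left _ _) (hinr i)

theorem eq_of_inl_mem_of_inr_mem {e : Sym2 (W ⊕ Fin 2)} (he : e ∈ (attachTriangle G' w).edgeSet)
    {u : W} {i : Fin 2} (hu : .inl u ∈ e) (hi : .inr i ∈ e) : u = w := by
  rcases eq_of_inr_mem_of_mem_edgeSet_attachTriangle he hi with rfl | rfl <;> simp_all

theorem exists_mem_mem_of_inr_mem {e f : Sym2 (W ⊕ Fin 2)}
    (he : e ∈ (attachTriangle G' w).edgeSet) (hf : f ∈ (attachTriangle G' w).edgeSet)
    {i j : Fin 2} (hi : .inr i ∈ e) (hj : .inr j ∈ f) : ∃ v, v ∈ e ∧ v ∈ f := by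
  rcases eq_of_inr_mem_of_mem_edgeSet_attachTriangle he hi with rfl | rfl <;>
    rcases eq_of_inr_mem_of_mem_edgeSet_attachTriangle hf hj with rfl | rfl
  · exact ⟨.inl w, by simp, by simp⟩
  · exact ⟨.inr i, by simp, by fin_cases i <;> simp⟩
  · exact ⟨.inr j, by fin_cases j <;> simp, by simp⟩
  · exact ⟨.inr 0, by simp, by simp⟩

theorem mem_edgeSet_map_inl_deleteIncidenceSet_iff {e : Sym2 (W ⊕ Fin 2)} :
    e ∈ ((G'.deleteIncidenceSet w).map Embedding.inl).edgeSet ↔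
      e ∈ (G'.map Embedding.inl).edgeSet ∧ .inl w ∉ e := by
  simp only [edgeSet_map, edgeSet_deleteIncidenceSet, incidenceSet, Set.mem_image,
    Set.mem_sdiff, Set.mem_ofPred_eq]
  constructor
  · rintro ⟨e₀, ⟨he₀, hw⟩, rfl⟩
    exact ⟨⟨e₀, he₀, rfl⟩, by simpa [Sym2.mem_map, he₀] using hw⟩
  · rintro ⟨⟨e₀, he₀, rfl⟩, hw⟩
    exact ⟨e₀, ⟨he₀, by simpa [Sym2.mem_map, he₀] using hw⟩, rfl⟩

variable {F : Finset (Sym2 (W ⊕ Fin 2))}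

theorem IsMinEDS.inr_inr_mem_and_unique (hF : IsMinEDS (attachTriangle G' w) F)
    (hz : ∀ t ∈ F, .inl w ∈ t → ∀ i, .inr i ∉ t) :
    s(.inr 0, .inr 1) ∈ F ∧ ∀ t ∈ F, ∀ i, .inr i ∈ t → t = s(.inr 0, .inr 1) := by
  have hxy : ∀ t ∈ F, ∀ i, .inr i ∈ t → t = s(.inr 0, .inr 1) := fun t ht i hit =>
    (eq_of_inr_mem_of_mem_edgeSet_attachTriangle (hF.1.1 ht) hit).resolve_left
      fun h => hz t ht (h ▸ Sym2.mem_mk_right _ _) i hit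
  refine ⟨?_, hxy⟩
  obtain ⟨f, hf, v, hv, hvf⟩ := hF.1.2 s(.inr 0, .inr 1)
    ((attachTriangle_adj_inr_inr (G' := G') (w := w)).mpr (by decide))
  rcases Sym2.mem_iff.mp hv with rfl | rfl
  · exact hxy f hf 0 hvf ▸ hf
  · exact hxy f hf 1 hvf ▸ hf

variable [DecidableEq W]

theorem IsMinEDS.eq_of_inr_mem (hF : IsMinEDS (attachTriangle G' w) F) {t t' : Sym2 (W ⊕ Fin 2)}
    (ht : t ∈ F) (hzt : .inl w ∈ t) {i j : Fin 2} (hit : .inr i ∈ t) (ht' : t' ∈ F)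
    (hjt' : .inr j ∈ t') : t' = t := by
  by_contra hne
  refine hF.2 (F.erase t') (erase_ssubset ht')
    ⟨(coe_subset.mpr (erase_subset _ _)).trans hF.1.1, fun e he => ?_⟩
  obtain ⟨f, hf, v, hve, hvf⟩ := hF.1.2 e he
  by_cases hft' : f = t'
  · subst hft'
    refine ⟨t, mem_erase.mpr ⟨Ne.symm hne, ht⟩, ?_⟩
    rcases v with u | k
    · obtain rfl := eq_of_inl_mem_of_inr_mem (hF.1.1 ht') hvf hjt'
      exact ⟨_, hve, hzt⟩
    · exact exists_mem_mem_of_inr_mem he (hF.1.1 ht) hve hit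
  · exact ⟨f, mem_erase.mpr ⟨hft', hf⟩, v, hve, hvf⟩

theorem IsMinEDS.isMinEDS_erase_map_inl (hF : IsMinEDS (attachTriangle G' w) F)
    {t : Sym2 (W ⊕ Fin 2)} (ht : t ∈ F) {i : Fin 2} (hit : .inr i ∈ t)
    (hsub : ∀ f ∈ F.erase t, f ∈ (G'.map Embedding.inl).edgeSet)
    (hz : .inl w ∈ t → ∃ f ∈ F.erase t, .inl w ∈ f) :
    IsMinEDS (G'.map Embedding.inl) (F.erase t) := by
  refine hF.isMinEDS_erase ht map_inl_le_attachTriangle hsub (fun e he => ?_) fun e he heK => ?_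
  · obtain ⟨f, hf, v, hve, hvf⟩ := hF.1.2 e (edgeSet_mono map_inl_le_attachTriangle he)
    by_cases hft : f = t
    · subst hft
      rcases v with u | k
      · obtain rfl := eq_of_inl_mem_of_inr_mem (hF.1.1 hf) hvf hit
        obtain ⟨f', hf', hwf'⟩ := hz hvf
        exact ⟨f', hf', _, hve, hwf'⟩
      · exact absurd hve (inr_notMem_of_mem_edgeSet_map_inl he k)
    · exact ⟨f, mem_erase.mpr ⟨hft, hf⟩, v, hve, hvf⟩
  · obtain ⟨j, hj⟩ : ∃ j, .inr j ∈ e := by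
      by_contra! h
      exact heK (mem_edgeSet_map_inl_of_mem_edgeSet_attachTriangle he h)
    exact exists_mem_mem_of_inr_mem he (hF.1.1 ht) hj hit

theorem IsMinEDS.isMinEDS_erase_map_inl_deleteIncidenceSet
    (hF : IsMinEDS (attachTriangle G' w) F) {t : Sym2 (W ⊕ Fin 2)} (ht : t ∈ F)
    (hzt : .inl w ∈ t) {i : Fin 2} (hit : .inr i ∈ t)
    (hsub : ∀ f ∈ F.erase t, f ∈ (G'.map Embedding.inl).edgeSet)
    (hz : ∀ f ∈ F.erase t, .inl w ∉ f) :
    IsMinEDS ((G'.deleteIncidenceSet w).map Embedding.inl) (F.erase t) := by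
  have hle : (G'.deleteIncidenceSet w).map Embedding.inl ≤ attachTriangle G' w :=
    (map_monotone _ (deleteIncidenceSet_le G' w)).trans map_inl_le_attachTriangle
  refine hF.isMinEDS_erase ht hle
    (fun f hf => mem_edgeSet_map_inl_deleteIncidenceSet_iff.mpr ⟨hsub f hf, hz f hf⟩)
    (fun e he => ?_) fun e he heK => ?_
  · obtain ⟨f, hf, v, hve, hvf⟩ := hF.1.2 e (edgeSet_mono hle he)
    have hft : f ≠ t := by
      rintro rfl
      rw [mem_edgeSet_map_inl_deleteIncidenceSet_iff] at he
      rcases v with u | k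
      · obtain rfl := eq_of_inl_mem_of_inr_mem (hF.1.1 hf) hvf hit
        exact he.2 hve
      · exact inr_notMem_of_mem_edgeSet_map_inl he.1 k hve
    exact ⟨f, mem_erase.mpr ⟨hft, hf⟩, v, hve, hvf⟩
  · by_cases hinr : ∃ j, .inr j ∈ e
    · obtain ⟨j, hj⟩ := hinr
      exact exists_mem_mem_of_inr_mem he (hF.1.1 ht) hj hit
    · push Not at hinr
      refine ⟨.inl w, ?_, hzt⟩
      by_contra hwe
      exact heK (mem_edgeSet_map_inl_deleteIncidenceSet_iff.mpr
        ⟨mem_edgeSet_map_inl_of_mem_edgeSet_attachTriangle he hinr, hwe⟩)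

theorem IsMinEDS.card_attachTriangle {k : ℕ} (hG' : ∀ F, IsMinEDS G' F → F.card = k)
    (hH : ∀ F, IsMinEDS (G'.deleteIncidenceSet w) F → F.card = k)
    (hF : IsMinEDS (attachTriangle G' w) F) : F.card = k + 1 := by
  suffices ∃ t ∈ F, IsMinEDS (G'.map Embedding.inl) (F.erase t) ∨
      IsMinEDS ((G'.deleteIncidenceSet w).map Embedding.inl) (F.erase t) by
    obtain ⟨t, ht, hmin | hmin⟩ := this <;> obtain ⟨F₀, hF₀, hcard⟩ := hmin.exists_of_map <;>
      rw [← card_erase_add_one ht, ← hcard]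
    exacts [congrArg (· + 1) (hG' F₀ hF₀), congrArg (· + 1) (hH F₀ hF₀)]
  by_cases hz : ∃ t ∈ F, .inl w ∈ t ∧ ∃ i, .inr i ∈ t
  · obtain ⟨t, ht, hzt, i, hit⟩ := hz
    have hsub : ∀ f ∈ F.erase t, f ∈ (G'.map Embedding.inl).edgeSet := fun f hf =>
      mem_edgeSet_map_inl_of_mem_edgeSet_attachTriangle (hF.1.1 (mem_of_mem_erase hf))
        fun j hj => ne_of_mem_erase hf (hF.eq_of_inr_mem ht hzt hit (mem_of_mem_erase hf) hj)
    by_cases hw : ∃ f ∈ F.erase t, .inl w ∈ f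
    · exact ⟨t, ht, .inl (hF.isMinEDS_erase_map_inl ht hit hsub fun _ => hw)⟩
    · push Not at hw
      exact ⟨t, ht, .inr (hF.isMinEDS_erase_map_inl_deleteIncidenceSet ht hzt hit hsub hw)⟩
  · push Not at hz
    obtain ⟨hxy, hxy'⟩ := hF.inr_inr_mem_and_unique hz
    have hsub : ∀ f ∈ F.erase s(.inr 0, .inr 1), f ∈ (G'.map Embedding.inl).edgeSet :=
      fun f hf => mem_edgeSet_map_inl_of_mem_edgeSet_attachTriangle (hF.1.1 (mem_of_mem_erase hf))
        fun j hj => ne_of_mem_erase hf (hxy' f (mem_of_mem_erase hf) j hj)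
    exact ⟨_, hxy, .inl (hF.isMinEDS_erase_map_inl hxy (i := 0) (by simp) hsub
      fun h => by simp at h)⟩

end Triangle

end

theorem attachTriangle_minEDS_card_general {W : Type*} [Fintype W]
    (G' : SimpleGraph W) (A B : Finset W)
    (hdisj : Disjoint A B)
    (hbip : ∀ a b : W, G'.Adj a b → (a ∈ A ∧ b ∈ B) ∨ (a ∈ B ∧ b ∈ A))
    (hconn : G'.Connected) (hwed : WellEdgeDominated G')
    (hcard : A.card < B.card)
    (w : W) (hw : w ∈ B)
    (hdet : WellEdgeDominated (G'.induce {v : W | v ≠ w})) :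
    (∀ F : Finset (Sym2 (W ⊕ Fin 2)), IsMinEDS (attachTriangle G' w) F →
      F.card = A.card + 1) ∧ WellEdgeDominated (attachTriangle G' w) := by
  classical
  have hG' : G'.IsBipartiteWith ↑A ↑B := ⟨disjoint_coe.mpr hdisj, hbip⟩
  have hwedH : WellEdgeDominated (G'.deleteIncidenceSet w) := by
    rw [deleteIncidenceSet_eq_map_induce]
    exact hdet.map _
  obtain ⟨M, hM⟩ := exists_isMaximalMatching G'
  obtain ⟨MH, hMH⟩ := exists_isMaximalMatching (G'.deleteIncidenceSet w)
  have hcardF := fun F (hF : IsMinEDS (attachTriangle G' w) F) => hF.card_attachTriangle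
    (fun F₀ hF₀ => (hwed _ _ hF₀ hM.isMinEDS).trans
      (hwed.equimatchable.card_eq_of_connected hG' hconn hcard hM))
    (fun F₀ hF₀ => (hwedH _ _ hF₀ hMH.isMinEDS).trans
      (card_eq_of_isMaximalMatching_deleteIncidenceSet hG' hconn hwed.equimatchable
        hwedH.equimatchable hcard hw hMH))
  exact ⟨hcardF, fun F₁ F₂ h₁ h₂ => by rw [hcardF F₁ h₁, hcardF F₂ h₂]⟩

/-- If `G'` is a connected well-edge-dominated bipartite graph with bipartition `A ∪ B`,
`|A| < |B|`, and `w ∈ B` is detachable (`G' - w` is well-edge-dominated), then every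
minimal edge dominating set of the graph obtained by gluing a triangle at `w` has
cardinality `|A| + 1`; in particular that graph is well-edge-dominated. -/
theorem attachTriangle_minEDS_card {W : Type*} [Fintype W] [DecidableEq W]
    (G' : SimpleGraph W) (A B : Finset W)
    (hdisj : Disjoint A B) (hcover : A ∪ B = Finset.univ)
    (hbip : ∀ a b : W, G'.Adj a b → (a ∈ A ∧ b ∈ B) ∨ (a ∈ B ∧ b ∈ A))
    (hconn : G'.Connected) (hwed : WellEdgeDominated G')
    (hcard : A.card < B.card)
    (w : W) (hw : w ∈ B)
    (hdet : WellEdgeDominated (G'.induce {v : W | v ≠ w})) :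
    (∀ F : Finset (Sym2 (W ⊕ Fin 2)), IsMinEDS (attachTriangle G' w) F →
      F.card = A.card + 1) ∧ WellEdgeDominated (attachTriangle G' w) :=
  attachTriangle_minEDS_card_general G' A B hdisj hbip hconn hwed hcard w hw hdet
end
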